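/- arXiv:2603.06678 — 9 statements merged into one kernel-verified Lean document; each statement's English description precedes it below -/
import Mathlib

section
/- If a redundancy function I_cap satisfies Weak Monotonicity and Self-Redundancy, then it satisfies the Lower Bound property: for any random variable Q such that Q is a deterministic function of each source X_i (i = 1,...,n), we have I_cap(X_1,...,X_n; Y) ≥ I(Q; Y). -/
/-- A (finite, discrete) random variable on the finite sample space `Ω`,
with values encoded as natural numbers. -/
abbrev RV (Ω : Type) := Ω → ℕ

/-- `p` is a probability mass function on `Ω`. -/
def IsPMF {Ω : Type} [Fintype Ω] (p : Ω → ℝ) : Prop :=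
  (∀ ω, 0 ≤ p ω) ∧ ∑ ω, p ω = 1

/-- Probability that the random variable `X` takes the value `v`. -/
noncomputable def prob {Ω α : Type} [Fintype Ω] [DecidableEq α]
    (p : Ω → ℝ) (X : Ω → α) (v : α) : ℝ :=
  ∑ ω ∈ Finset.univ.filter (fun ω => X ω = v), p ω

/-- Shannon entropy of the random variable `X` under the distribution `p`. -/
noncomputable def ent {Ω α : Type} [Fintype Ω] [DecidableEq α]
    (p : Ω → ℝ) (X : Ω → α) : ℝ :=
  ∑ v ∈ Finset.image X Finset.univ, -(prob p X v * Real.log (prob p X v))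

/-- Shannon mutual information `I(X;Y)` under the distribution `p`. -/
noncomputable def MI {Ω α β : Type} [Fintype Ω] [DecidableEq α] [DecidableEq β]
    (p : Ω → ℝ) (X : Ω → α) (Y : Ω → β) : ℝ :=
  ent p X + ent p Y - ent p (fun ω => (X ω, Y ω))

/-- The joint random variable `(X,Y)`, encoded back into `ℕ` via the
injective pairing function `Nat.pair`. -/
def joint {Ω : Type} (X Y : RV Ω) : RV Ω := fun ω => Nat.pair (X ω) (Y ω)

/- Appending `Q` to the sources cannot increase redundancy; since `Q` is a function of each
original source, these can then be removed one at a time without changing it, leaving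
`Icap [Q] Y = I(Q;Y)`. -/

theorem icap_append_singleton_eq_of_forall_rel {α β : Type*} (r : α → α → Prop)
    (Icap : List α → β → ℝ)
    (habsorb : ∀ (l : List α) (X : α) (Y : β), (∃ Z ∈ l, r Z X) → Icap (X :: l) Y = Icap l Y)
    (Q : α) (Y : β) : ∀ l : List α, (∀ X ∈ l, r Q X) → Icap (l ++ [Q]) Y = Icap [Q] Y
  | [], _ => rfl
  | X :: l, hl => by
    rw [List.cons_append, habsorb _ X Y ⟨Q, by simp, hl X List.mem_cons_self⟩]
    exact icap_append_singleton_eq_of_forall_rel r Icap habsorb Q Y l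
      fun Z hZ => hl Z (List.mem_cons_of_mem _ hZ)

theorem lower_bound_of_weak_monotonicity_and_self_redundancy_general
    {Ω : Type} [Fintype Ω] (p : Ω → ℝ)
    (Icap : List (RV Ω) → RV Ω → ℝ)
    -- Self-Redundancy: for a single source, redundancy is mutual information
    (hSR : ∀ X Y : RV Ω, Icap [X] Y = MI p X Y)
    -- Weak Monotonicity: adding a source (anywhere in the list) does not increase
    -- redundancy, with equality if some existing source is a deterministic function
    -- of the added source
    (hWM : ∀ (l₁ l₂ : List (RV Ω)) (X Y : RV Ω),
      Icap (l₁ ++ [X] ++ l₂) Y ≤ Icap (l₁ ++ l₂) Y ∧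
      ((∃ Z ∈ l₁ ++ l₂, ∃ f : ℕ → ℕ, Z = f ∘ X) →
        Icap (l₁ ++ [X] ++ l₂) Y = Icap (l₁ ++ l₂) Y)) :
    -- Lower Bound
    ∀ (l : List (RV Ω)) (Q Y : RV Ω), l ≠ [] →
      (∀ X ∈ l, ∃ f : ℕ → ℕ, Q = f ∘ X) →
      MI p Q Y ≤ Icap l Y := by
  intro l Q Y _ hQ
  have habsorb : ∀ (l : List (RV Ω)) (X Y : RV Ω), (∃ Z ∈ l, ∃ f : ℕ → ℕ, Z = f ∘ X) →
      Icap (X :: l) Y = Icap l Y := fun l X Y h => by simpa using (hWM [] l X Y).2 h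
  calc MI p Q Y = Icap [Q] Y := (hSR Q Y).symm
    _ = Icap (l ++ [Q]) Y :=
      (icap_append_singleton_eq_of_forall_rel _ Icap habsorb Q Y l hQ).symm
    _ ≤ Icap l Y := by simpa using (hWM l [] Q Y).1

/-- If a redundancy function `Icap` satisfies Weak Monotonicity and
Self-Redundancy, then it satisfies the Lower Bound property: for any random variable `Q`
that is a deterministic function of each source `X i`, `Icap(X₁,…,Xₙ;Y) ≥ I(Q;Y)`. -/
theorem lower_bound_of_weak_monotonicity_and_self_redundancy
    {Ω : Type} [Fintype Ω] (p : Ω → ℝ) (hp : IsPMF p)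
    (Icap : List (RV Ω) → RV Ω → ℝ)
    -- Self-Redundancy: for a single source, redundancy is mutual information
    (hSR : ∀ X Y : RV Ω, Icap [X] Y = MI p X Y)
    -- Weak Monotonicity: adding a source (anywhere in the list) does not increase
    -- redundancy, with equality if some existing source is a deterministic function
    -- of the added source
    (hWM : ∀ (l₁ l₂ : List (RV Ω)) (X Y : RV Ω),
      Icap (l₁ ++ [X] ++ l₂) Y ≤ Icap (l₁ ++ l₂) Y ∧
      ((∃ Z ∈ l₁ ++ l₂, ∃ f : ℕ → ℕ, Z = f ∘ X) →
        Icap (l₁ ++ [X] ++ l₂) Y = Icap (l₁ ++ l₂) Y)) :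
    -- Lower Bound
    ∀ (l : List (RV Ω)) (Q Y : RV Ω), l ≠ [] →
      (∀ X ∈ l, ∃ f : ℕ → ℕ, Q = f ∘ X) →
      MI p Q Y ≤ Icap l Y :=
  lower_bound_of_weak_monotonicity_and_self_redundancy_general p Icap hSR hWM
end

section
/- If a redundancy function I_cap satisfies Self-Redundancy, Target Chain rule, and Target Equality, then it satisfies the Identity property: I_cap(X_1, X_2; (X_1, X_2)) = I(X_1; X_2). -/
/-- The conditional distribution of `p` given the event `Z = z`. -/
noncomputable def condDist {Ω : Type} [Fintype Ω] (p : Ω → ℝ) (Z : RV Ω) (z : ℕ) :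
    Ω → ℝ :=
  fun ω => if Z ω = z then p ω / prob p Z z else 0

/-- Conditional redundancy `Icap(l; Y₂ | Y₁)`: the expectation over outcomes `y₁` of `Y₁`
of the redundancy evaluated on the conditional distribution given `Y₁ = y₁`. -/
noncomputable def IcapCond {Ω : Type} [Fintype Ω]
    (Icap : (Ω → ℝ) → List (RV Ω) → RV Ω → ℝ)
    (p : Ω → ℝ) (l : List (RV Ω)) (Y₂ Y₁ : RV Ω) : ℝ :=
  ∑ z ∈ Finset.image Y₁ Finset.univ, prob p Y₁ z * Icap (condDist p Y₁ z) l Y₂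

/-!
Split the target `(X₁, X₂)` by the chain rule. The first term `Icap(X₁, X₂; X₁)` loses the
source `X₁` by Target Equality and becomes `I(X₂; X₁)` by Self-Redundancy. In the conditional
term, each conditional distribution given `X₁ = z` makes `X₁` constant; there Target Equality
and Self-Redundancy reduce `Icap(X₁, X₂; X₂)` to `I(X₁; X₂)`, which vanishes because `X₁`
carries no information.
-/

open Finset

section Entropy

variable {Ω α β : Type} [Fintype Ω] [DecidableEq α] [DecidableEq β]

lemma prob_eq_zero_of_notMem_image (q : Ω → ℝ) (X : Ω → α) {v : α}
    (hv : v ∉ image X univ) : prob q X v = 0 := by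
  refine sum_eq_zero fun ω hω => absurd ?_ hv
  exact mem_image.mpr ⟨ω, mem_univ ω, (mem_filter.mp hω).2⟩

lemma ent_eq_sum_of_prob_eq_zero (q : Ω → ℝ) (X : Ω → α) (S : Finset α)
    (hS : ∀ v ∉ S, prob q X v = 0) :
    ent q X = ∑ v ∈ S, -(prob q X v * Real.log (prob q X v)) :=
  calc ent q X = ∑ v ∈ image X univ ∪ S, -(prob q X v * Real.log (prob q X v)) :=
        sum_subset subset_union_left fun v _ hv => by
          rw [prob_eq_zero_of_notMem_image q X hv]; simp
    _ = _ := (sum_subset subset_union_right fun v _ hv => by rw [hS v hv]; simp).symm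

lemma prob_comp_of_injective (q : Ω → ℝ) (X : Ω → α) {f : α → β}
    (hf : Function.Injective f) (v : α) : prob q (fun ω => f (X ω)) (f v) = prob q X v := by
  simp only [prob, hf.eq_iff]

lemma ent_comp_of_injective (q : Ω → ℝ) (X : Ω → α) {f : α → β}
    (hf : Function.Injective f) : ent q (fun ω => f (X ω)) = ent q X := by
  rw [ent, ← Function.comp_def f X, ← image_image, sum_image hf.injOn]
  simp only [Function.comp_def, prob_comp_of_injective q X hf, ent]

lemma MI_comm (q : Ω → ℝ) (X : Ω → α) (Y : Ω → β) : MI q X Y = MI q Y X := by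
  have hswap : ent q (fun ω => (Y ω, X ω)) = ent q (fun ω => (X ω, Y ω)) :=
    ent_comp_of_injective (f := Prod.swap) q (fun ω => (X ω, Y ω)) Prod.swap_injective
  rw [MI, MI, hswap]
  ring

end Entropy

section ConstantOnSupport

variable {Ω α β : Type} [Fintype Ω] [DecidableEq α] [DecidableEq β]
  {q : Ω → ℝ} {X : Ω → α} {z : α}

lemma prob_eq_zero_of_support_of_ne (hX : ∀ ω, X ω ≠ z → q ω = 0) {v : α} (hv : v ≠ z) :
    prob q X v = 0 :=
  sum_eq_zero fun ω hω => hX ω ((mem_filter.mp hω).2 ▸ hv)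

lemma prob_self_of_support (hX : ∀ ω, X ω ≠ z → q ω = 0) : prob q X z = ∑ ω, q ω :=
  sum_subset (filter_subset _ _) fun ω _ hω => hX ω (by simpa using hω)

lemma prob_prodMk_of_support (hX : ∀ ω, X ω ≠ z → q ω = 0) (Y : Ω → β) (w : β) :
    prob q (fun ω => (X ω, Y ω)) (z, w) = prob q Y w := by
  refine sum_subset (fun ω hω => by simp_all) fun ω hω hω' => hX ω fun hXω => hω' ?_
  simp_all

lemma prob_prodMk_of_support_of_ne (hX : ∀ ω, X ω ≠ z → q ω = 0) (Y : Ω → β)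
    {v : α} (hv : v ≠ z) (w : β) : prob q (fun ω => (X ω, Y ω)) (v, w) = 0 :=
  sum_eq_zero fun ω hω => hX ω (by simp_all)

lemma ent_eq_zero_of_support (hq : ∑ ω, q ω = 1) (hX : ∀ ω, X ω ≠ z → q ω = 0) :
    ent q X = 0 := by
  rw [ent_eq_sum_of_prob_eq_zero q X {z} fun v hv =>
    prob_eq_zero_of_support_of_ne hX (mem_singleton.not.mp hv)]
  simp [prob_self_of_support hX, hq]

lemma ent_prodMk_eq_of_support (hX : ∀ ω, X ω ≠ z → q ω = 0) (Y : Ω → β) :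
    ent q (fun ω => (X ω, Y ω)) = ent q Y := by
  have hS : ∀ vw ∉ (image Y univ).image (Prod.mk z), prob q (fun ω => (X ω, Y ω)) vw = 0 := by
    rintro ⟨v, w⟩ hvw
    by_cases hv : v = z
    · subst hv
      rw [prob_prodMk_of_support hX]
      exact prob_eq_zero_of_notMem_image q Y fun hw => hvw (mem_image_of_mem _ hw)
    · exact prob_prodMk_of_support_of_ne hX Y hv w
  rw [ent_eq_sum_of_prob_eq_zero q _ _ hS, sum_image (Prod.mk_right_injective z).injOn]
  simp only [prob_prodMk_of_support hX, ent]

lemma MI_eq_zero_of_support (hq : ∑ ω, q ω = 1) (hX : ∀ ω, X ω ≠ z → q ω = 0)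
    (Y : Ω → β) : MI q X Y = 0 := by
  rw [MI, ent_eq_zero_of_support hq hX, ent_prodMk_eq_of_support hX]
  ring

end ConstantOnSupport

section Conditioning

variable {Ω : Type} [Fintype Ω] {p : Ω → ℝ} {Z : RV Ω} {z : ℕ}

lemma condDist_of_ne (p : Ω → ℝ) {ω : Ω} (h : Z ω ≠ z) : condDist p Z z ω = 0 :=
  if_neg h

lemma IsPMF.condDist (hp : IsPMF p) (hz : prob p Z z ≠ 0) : IsPMF (condDist p Z z) := by
  refine ⟨fun ω => ?_, ?_⟩
  · unfold _root_.condDist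
    split_ifs
    · exact div_nonneg (hp.1 ω) (sum_nonneg fun ω _ => hp.1 ω)
    · exact le_rfl
  · unfold _root_.condDist
    rw [sum_ite, sum_const_zero, add_zero, ← sum_div]
    exact div_self hz

lemma MI_condDist_self (hp : IsPMF p) (hz : prob p Z z ≠ 0) (Y : RV Ω) :
    MI (condDist p Z z) Z Y = 0 :=
  MI_eq_zero_of_support (hp.condDist hz).2 (fun _ => condDist_of_ne p) Y

lemma IcapCond_eq_zero {Icap : (Ω → ℝ) → List (RV Ω) → RV Ω → ℝ} {l : List (RV Ω)}
    {Y₂ : RV Ω} (h : ∀ z, prob p Z z ≠ 0 → Icap (condDist p Z z) l Y₂ = 0) :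
    IcapCond Icap p l Y₂ Z = 0 := by
  refine sum_eq_zero fun z _ => ?_
  by_cases hz : prob p Z z = 0
  · rw [hz, zero_mul]
  · rw [h z hz, mul_zero]

end Conditioning

/-- If a redundancy function satisfies Self-Redundancy, the Target Chain
rule, and Target Equality, then it satisfies the Identity property:
`Icap(X₁, X₂; (X₁,X₂)) = I(X₁;X₂)`. -/
theorem identity_of_self_redundancy_target_chain_rule_and_target_equality
    {Ω : Type} [Fintype Ω]
    (Icap : (Ω → ℝ) → List (RV Ω) → RV Ω → ℝ)
    -- Self-Redundancy (for every probability distribution)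
    (hSR : ∀ p : Ω → ℝ, IsPMF p → ∀ X Y : RV Ω, Icap p [X] Y = MI p X Y)
    -- Target Chain rule
    (hTC : ∀ p : Ω → ℝ, IsPMF p → ∀ (l : List (RV Ω)) (Y₁ Y₂ : RV Ω),
      Icap p l (joint Y₁ Y₂) = Icap p l Y₁ + IcapCond Icap p l Y₂ Y₁)
    -- Target Equality: adding the target (anywhere) to the sources does not change Icap
    (hTE : ∀ p : Ω → ℝ, IsPMF p → ∀ (l₁ l₂ : List (RV Ω)) (Y : RV Ω),
      Icap p (l₁ ++ [Y] ++ l₂) Y = Icap p (l₁ ++ l₂) Y)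
    (p : Ω → ℝ) (hp : IsPMF p) (X₁ X₂ : RV Ω) :
    -- Identity property
    Icap p [X₁, X₂] (joint X₁ X₂) = MI p X₁ X₂ := by
  have hfirst : Icap p [X₁, X₂] X₁ = MI p X₁ X₂ :=
    calc Icap p [X₁, X₂] X₁ = Icap p [X₂] X₁ := hTE p hp [] [X₂] X₁
      _ = MI p X₁ X₂ := by rw [hSR p hp, MI_comm]
  have hcond : IcapCond Icap p [X₁, X₂] X₂ X₁ = 0 := IcapCond_eq_zero fun z hz =>
    have hq := hp.condDist hz
    calc Icap (condDist p X₁ z) [X₁, X₂] X₂ = Icap (condDist p X₁ z) [X₁] X₂ :=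
          hTE _ hq [X₁] [] X₂
      _ = 0 := by rw [hSR _ hq, MI_condDist_self hp hz]
  rw [hTC p hp, hfirst, hcond, add_zero]
end

section
/- A redundancy function I_cap satisfies Strong Monotonicity if and only if it satisfies both Weak Monotonicity and Target Equality. -/
/-!
Strong Monotonicity differs from Weak Monotonicity only in the case where the target `Y` is a
function of the new source `X`. Target Equality is that case with `X = Y`; conversely, given
Target Equality, `Y` may be inserted right after `X` and removed again at no cost, and while it
is present Weak Monotonicity already removes `X`.
-/

section Redundancy

variable {Ω α R : Type*} [LE R] (I : List (Ω → α) → (Ω → α) → R)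

def WeakMonotonicity : Prop :=
  ∀ (l₁ l₂ : List (Ω → α)) (X Y : Ω → α),
    I (l₁ ++ [X] ++ l₂) Y ≤ I (l₁ ++ l₂) Y ∧
    ((∃ Z ∈ l₁ ++ l₂, ∃ f : α → α, Z = f ∘ X) → I (l₁ ++ [X] ++ l₂) Y = I (l₁ ++ l₂) Y)

def StrongMonotonicity : Prop :=
  ∀ (l₁ l₂ : List (Ω → α)) (X Y : Ω → α),
    I (l₁ ++ [X] ++ l₂) Y ≤ I (l₁ ++ l₂) Y ∧
    ((∃ Z : Ω → α, (Z ∈ l₁ ++ l₂ ∨ Z = Y) ∧ ∃ f : α → α, Z = f ∘ X) →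
      I (l₁ ++ [X] ++ l₂) Y = I (l₁ ++ l₂) Y)

def TargetEquality : Prop :=
  ∀ (l₁ l₂ : List (Ω → α)) (Y : Ω → α), I (l₁ ++ [Y] ++ l₂) Y = I (l₁ ++ l₂) Y

variable {I}

theorem StrongMonotonicity.weakMonotonicity (hS : StrongMonotonicity I) :
    WeakMonotonicity I := fun l₁ l₂ X Y =>
  ⟨(hS l₁ l₂ X Y).1, fun ⟨Z, hZ, hZX⟩ => (hS l₁ l₂ X Y).2 ⟨Z, Or.inl hZ, hZX⟩⟩

theorem StrongMonotonicity.targetEquality (hS : StrongMonotonicity I) : TargetEquality I :=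
  fun l₁ l₂ Y => (hS l₁ l₂ Y Y).2 ⟨Y, Or.inr rfl, id, rfl⟩

theorem WeakMonotonicity.eq_of_target_eq_comp (hW : WeakMonotonicity I)
    (hT : TargetEquality I) (l₁ l₂ : List (Ω → α)) {X Y : Ω → α} {f : α → α}
    (hYX : Y = f ∘ X) : I (l₁ ++ [X] ++ l₂) Y = I (l₁ ++ l₂) Y :=
  calc I (l₁ ++ [X] ++ l₂) Y
      = I (l₁ ++ [X] ++ [Y] ++ l₂) Y := (hT (l₁ ++ [X]) l₂ Y).symm
    _ = I (l₁ ++ ([Y] ++ l₂)) Y := by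
      simpa only [List.append_assoc] using (hW l₁ ([Y] ++ l₂) X Y).2 ⟨Y, by simp, f, hYX⟩
    _ = I (l₁ ++ l₂) Y := by simpa only [List.append_assoc] using hT l₁ l₂ Y

theorem WeakMonotonicity.strongMonotonicity (hW : WeakMonotonicity I)
    (hT : TargetEquality I) : StrongMonotonicity I := by
  rintro l₁ l₂ X Y
  refine ⟨(hW l₁ l₂ X Y).1, ?_⟩
  rintro ⟨Z, hZ | rfl, f, hZX⟩
  · exact (hW l₁ l₂ X Y).2 ⟨Z, hZ, f, hZX⟩
  · exact hW.eq_of_target_eq_comp hT l₁ l₂ hZX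

theorem strongMonotonicity_iff_weakMonotonicity_and_targetEquality :
    StrongMonotonicity I ↔ WeakMonotonicity I ∧ TargetEquality I :=
  ⟨fun hS => ⟨hS.weakMonotonicity, hS.targetEquality⟩,
    fun ⟨hW, hT⟩ => hW.strongMonotonicity hT⟩

end Redundancy

theorem strong_monotonicity_iff_weak_monotonicity_and_target_equality_general
    {Ω : Type} (Icap : List (RV Ω) → RV Ω → ℝ) :
    -- Strong Monotonicity: adding a source does not increase redundancy, with equality
    -- if some existing source, or the target, is a deterministic function of it
    (∀ (l₁ l₂ : List (RV Ω)) (X Y : RV Ω),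
      Icap (l₁ ++ [X] ++ l₂) Y ≤ Icap (l₁ ++ l₂) Y ∧
      ((∃ Z : RV Ω, (Z ∈ l₁ ++ l₂ ∨ Z = Y) ∧ ∃ f : ℕ → ℕ, Z = f ∘ X) →
        Icap (l₁ ++ [X] ++ l₂) Y = Icap (l₁ ++ l₂) Y))
    ↔
    -- Weak Monotonicity
    ((∀ (l₁ l₂ : List (RV Ω)) (X Y : RV Ω),
      Icap (l₁ ++ [X] ++ l₂) Y ≤ Icap (l₁ ++ l₂) Y ∧
      ((∃ Z ∈ l₁ ++ l₂, ∃ f : ℕ → ℕ, Z = f ∘ X) →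
        Icap (l₁ ++ [X] ++ l₂) Y = Icap (l₁ ++ l₂) Y))
    ∧
    -- Target Equality
    (∀ (l₁ l₂ : List (RV Ω)) (Y : RV Ω),
      Icap (l₁ ++ [Y] ++ l₂) Y = Icap (l₁ ++ l₂) Y)) :=
  strongMonotonicity_iff_weakMonotonicity_and_targetEquality (I := Icap)

/-- A redundancy function satisfies Strong Monotonicity if and only if it
satisfies both Weak Monotonicity and Target Equality. -/
theorem strong_monotonicity_iff_weak_monotonicity_and_target_equality
    {Ω : Type} [Fintype Ω] (Icap : List (RV Ω) → RV Ω → ℝ) :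
    -- Strong Monotonicity: adding a source does not increase redundancy, with equality
    -- if some existing source, or the target, is a deterministic function of it
    (∀ (l₁ l₂ : List (RV Ω)) (X Y : RV Ω),
      Icap (l₁ ++ [X] ++ l₂) Y ≤ Icap (l₁ ++ l₂) Y ∧
      ((∃ Z : RV Ω, (Z ∈ l₁ ++ l₂ ∨ Z = Y) ∧ ∃ f : ℕ → ℕ, Z = f ∘ X) →
        Icap (l₁ ++ [X] ++ l₂) Y = Icap (l₁ ++ l₂) Y))
    ↔
    -- Weak Monotonicity
    ((∀ (l₁ l₂ : List (RV Ω)) (X Y : RV Ω),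
      Icap (l₁ ++ [X] ++ l₂) Y ≤ Icap (l₁ ++ l₂) Y ∧
      ((∃ Z ∈ l₁ ++ l₂, ∃ f : ℕ → ℕ, Z = f ∘ X) →
        Icap (l₁ ++ [X] ++ l₂) Y = Icap (l₁ ++ l₂) Y))
    ∧
    -- Target Equality
    (∀ (l₁ l₂ : List (RV Ω)) (Y : RV Ω),
      Icap (l₁ ++ [Y] ++ l₂) Y = Icap (l₁ ++ l₂) Y)) :=
  strong_monotonicity_iff_weak_monotonicity_and_target_equality_general Icap
end

section
/- If a redundancy function I_cap satisfies Self-Redundancy, Subset Equality, and Strong Symmetry, then it satisfies the Identity property: I_cap(X_1, X_2; (X_1, X_2)) = I(X_1; X_2). -/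
/-
Strong Symmetry swaps the target `(X₁, X₂)` with the source `X₂`, giving
`Icap(X₁, (X₁, X₂); X₂)`. The source `X₁` is a function of `(X₁, X₂)`, so Subset Equality
removes `(X₁, X₂)`, leaving `Icap(X₁; X₂) = I(X₁; X₂)` by Self-Redundancy.
-/

section Redundancy

variable {Ω : Type}

def SubsetEquality (Icap : List (RV Ω) → RV Ω → ℝ) : Prop :=
  ∀ (l₁ l₂ : List (RV Ω)) (W Y : RV Ω),
    (∃ Z ∈ l₁ ++ l₂, ∃ f : ℕ → ℕ, Z = f ∘ W) →
    Icap (l₁ ++ [W] ++ l₂) Y = Icap (l₁ ++ l₂) Y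

def StrongSymmetry (Icap : List (RV Ω) → RV Ω → ℝ) : Prop :=
  ∀ (l l' : List (RV Ω)) (Y Y' : RV Ω), (Y :: l).Perm (Y' :: l') → Icap l Y = Icap l' Y'

theorem unpair_fst_comp_joint (X Y : RV Ω) :
    (fun n => (Nat.unpair n).1) ∘ joint X Y = X := by
  funext ω
  simp [joint]

theorem StrongSymmetry.swap_target {Icap : List (RV Ω) → RV Ω → ℝ} (h : StrongSymmetry Icap)
    (X₁ X₂ Y : RV Ω) : Icap [X₁, X₂] Y = Icap [X₁, Y] X₂ :=
  h _ _ _ _ (List.reverse_perm [Y, X₁, X₂]).symm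

theorem SubsetEquality.erase_of_comp {Icap : List (RV Ω) → RV Ω → ℝ} (h : SubsetEquality Icap)
    {X W : RV Ω} (f : ℕ → ℕ) (hX : X = f ∘ W) (Y : RV Ω) : Icap [X, W] Y = Icap [X] Y :=
  h [X] [] W Y ⟨X, List.mem_singleton_self X, f, hX⟩

end Redundancy

theorem identity_of_self_redundancy_subset_equality_and_strong_symmetry_general
    {Ω : Type} [Fintype Ω] (p : Ω → ℝ)
    (Icap : List (RV Ω) → RV Ω → ℝ)
    -- Self-Redundancy
    (hSR : ∀ X Y : RV Ω, Icap [X] Y = MI p X Y)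
    -- Subset Equality: removing a source `W` of which some other source is a
    -- deterministic function preserves Icap
    (hSE : ∀ (l₁ l₂ : List (RV Ω)) (W Y : RV Ω),
      (∃ Z ∈ l₁ ++ l₂, ∃ f : ℕ → ℕ, Z = f ∘ W) →
      Icap (l₁ ++ [W] ++ l₂) Y = Icap (l₁ ++ l₂) Y)
    -- Strong Symmetry: Icap is invariant under any permutation of the combined list of
    -- sources and target
    (hSo : ∀ (l l' : List (RV Ω)) (Y Y' : RV Ω),
      (Y :: l).Perm (Y' :: l') → Icap l Y = Icap l' Y') :
    -- Identity property
    ∀ X₁ X₂ : RV Ω, Icap [X₁, X₂] (joint X₁ X₂) = MI p X₁ X₂ := by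
  intro X₁ X₂
  calc Icap [X₁, X₂] (joint X₁ X₂) = Icap [X₁, joint X₁ X₂] X₂ :=
        StrongSymmetry.swap_target hSo X₁ X₂ _
    _ = Icap [X₁] X₂ :=
        SubsetEquality.erase_of_comp hSE _ (unpair_fst_comp_joint X₁ X₂).symm X₂
    _ = MI p X₁ X₂ := hSR X₁ X₂

/-- If a redundancy function satisfies Self-Redundancy, Subset Equality,
and Strong Symmetry, then it satisfies the Identity property:
`Icap(X₁, X₂; (X₁,X₂)) = I(X₁;X₂)`. -/
theorem identity_of_self_redundancy_subset_equality_and_strong_symmetry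
    {Ω : Type} [Fintype Ω] (p : Ω → ℝ) (hp : IsPMF p)
    (Icap : List (RV Ω) → RV Ω → ℝ)
    -- Self-Redundancy
    (hSR : ∀ X Y : RV Ω, Icap [X] Y = MI p X Y)
    -- Subset Equality: removing a source `W` of which some other source is a
    -- deterministic function preserves Icap
    (hSE : ∀ (l₁ l₂ : List (RV Ω)) (W Y : RV Ω),
      (∃ Z ∈ l₁ ++ l₂, ∃ f : ℕ → ℕ, Z = f ∘ W) →
      Icap (l₁ ++ [W] ++ l₂) Y = Icap (l₁ ++ l₂) Y)
    -- Strong Symmetry: Icap is invariant under any permutation of the combined list of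
    -- sources and target
    (hSo : ∀ (l l' : List (RV Ω)) (Y Y' : RV Ω),
      (Y :: l).Perm (Y' :: l') → Icap l Y = Icap l' Y') :
    -- Identity property
    ∀ X₁ X₂ : RV Ω, Icap [X₁, X₂] (joint X₁ X₂) = MI p X₁ X₂ :=
  identity_of_self_redundancy_subset_equality_and_strong_symmetry_general p Icap hSR hSE hSo
end

section
/- If a redundancy function satisfies Identity and Target Monotonicity, then for any deterministic function f of two sources, I_cap(X_1, X_2; f(X_1, X_2)) ≤ I(X_1; X_2). -/
/-!
Write `Z = f(X₁, X₂)`. By Target Monotonicity, `I_cap(X₁, X₂; Z) ≤ I_cap(X₁, X₂; (Z, (X₁, X₂)))`.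
Since `Z` is a function of `(X₁, X₂)`, the target `(Z, (X₁, X₂))` is a relabelling of
`(X₁, X₂)`, so by Equivalence-class Invariance and Identity the right-hand side is `I(X₁; X₂)`.
-/

theorem icap_joint_comp_self_eq {Ω : Type} (Icap : List (RV Ω) → RV Ω → ℝ)
    (hEI : ∀ (l : List (RV Ω)) (Y Y' : RV Ω),
      (∃ g : ℕ → ℕ, Y' = g ∘ Y) → (∃ g' : ℕ → ℕ, Y = g' ∘ Y') →
      Icap l Y = Icap l Y')
    (l : List (RV Ω)) (Y : RV Ω) (h : ℕ → ℕ) :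
    Icap l (joint (h ∘ Y) Y) = Icap l Y :=
  hEI l _ _ ⟨fun n => n.unpair.2, by funext ω; simp [joint]⟩ ⟨fun n => Nat.pair (h n) n, rfl⟩

theorem icap_comp_le {Ω : Type} (Icap : List (RV Ω) → RV Ω → ℝ)
    (hTM : ∀ X₁ X₂ Y₁ Y₂ : RV Ω, Icap [X₁, X₂] Y₁ ≤ Icap [X₁, X₂] (joint Y₁ Y₂))
    (hEI : ∀ (l : List (RV Ω)) (Y Y' : RV Ω),
      (∃ g : ℕ → ℕ, Y' = g ∘ Y) → (∃ g' : ℕ → ℕ, Y = g' ∘ Y') →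
      Icap l Y = Icap l Y')
    (X₁ X₂ Y : RV Ω) (h : ℕ → ℕ) :
    Icap [X₁, X₂] (h ∘ Y) ≤ Icap [X₁, X₂] Y :=
  calc Icap [X₁, X₂] (h ∘ Y) ≤ Icap [X₁, X₂] (joint (h ∘ Y) Y) := hTM X₁ X₂ _ _
    _ = Icap [X₁, X₂] Y := icap_joint_comp_self_eq Icap hEI _ Y h

theorem redundancy_of_function_target_le_source_mutual_information_general
    {Ω : Type} [Fintype Ω] (p : Ω → ℝ)
    (Icap : List (RV Ω) → RV Ω → ℝ)
    -- Identity property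
    (hID : ∀ X₁ X₂ : RV Ω, Icap [X₁, X₂] (joint X₁ X₂) = MI p X₁ X₂)
    -- Target Monotonicity
    (hTM : ∀ X₁ X₂ Y₁ Y₂ : RV Ω, Icap [X₁, X₂] Y₁ ≤ Icap [X₁, X₂] (joint Y₁ Y₂))
    -- Equivalence-class Invariance: Icap is invariant under relabelling
    -- (bijective recoding) of the target
    (hEI : ∀ (l : List (RV Ω)) (Y Y' : RV Ω),
      (∃ g : ℕ → ℕ, Y' = g ∘ Y) → (∃ g' : ℕ → ℕ, Y = g' ∘ Y') →
      Icap l Y = Icap l Y')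
    (X₁ X₂ : RV Ω) (f : ℕ → ℕ → ℕ) :
    Icap [X₁, X₂] (fun ω => f (X₁ ω) (X₂ ω)) ≤ MI p X₁ X₂ := by
  have hfun : (fun ω => f (X₁ ω) (X₂ ω)) =
      (fun n => f n.unpair.1 n.unpair.2) ∘ joint X₁ X₂ := by
    funext ω
    simp [joint]
  rw [hfun, ← hID X₁ X₂]
  exact icap_comp_le Icap hTM hEI X₁ X₂ _ _

/-- If a redundancy function satisfies Identity and Target Monotonicity
(together with Equivalence-class Invariance of the target, which may be assumed), then
for any deterministic function `f` of the two sources,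
`Icap(X₁, X₂; f(X₁,X₂)) ≤ I(X₁;X₂)`. -/
theorem redundancy_of_function_target_le_source_mutual_information
    {Ω : Type} [Fintype Ω] (p : Ω → ℝ) (hp : IsPMF p)
    (Icap : List (RV Ω) → RV Ω → ℝ)
    -- Identity property
    (hID : ∀ X₁ X₂ : RV Ω, Icap [X₁, X₂] (joint X₁ X₂) = MI p X₁ X₂)
    -- Target Monotonicity
    (hTM : ∀ X₁ X₂ Y₁ Y₂ : RV Ω, Icap [X₁, X₂] Y₁ ≤ Icap [X₁, X₂] (joint Y₁ Y₂))
    -- Equivalence-class Invariance: Icap is invariant under relabelling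
    -- (bijective recoding) of the target
    (hEI : ∀ (l : List (RV Ω)) (Y Y' : RV Ω),
      (∃ g : ℕ → ℕ, Y' = g ∘ Y) → (∃ g' : ℕ → ℕ, Y = g' ∘ Y') →
      Icap l Y = Icap l Y')
    (X₁ X₂ : RV Ω) (f : ℕ → ℕ → ℕ) :
    Icap [X₁, X₂] (fun ω => f (X₁ ω) (X₂ ω)) ≤ MI p X₁ X₂ :=
  redundancy_of_function_target_le_source_mutual_information_general p Icap hID hTM hEI X₁ X₂ f
end

section
/- If a redundancy function satisfies Global Positivity, Independent Identity, and Target Monotonicity, then it admits no mechanistic redundancy: for independent sources X_1 ⊥ X_2 and any deterministic function f, I_cap(X_1, X_2; f(X_1, X_2)) = 0. -/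
/-- Two random variables are independent under `p`. -/
def IndepRV {Ω : Type} [Fintype Ω] (p : Ω → ℝ) (X₁ X₂ : RV Ω) : Prop :=
  ∀ a b : ℕ, prob p (fun ω => (X₁ ω, X₂ ω)) (a, b) = prob p X₁ a * prob p X₂ b

theorem joint_comp_self {Ω : Type} (g : ℕ → ℕ) (Y : RV Ω) :
    joint (g ∘ Y) Y = (fun n => Nat.pair (g n) n) ∘ Y :=
  rfl

theorem unpair_snd_comp_joint {Ω : Type} (Y₁ Y₂ : RV Ω) :
    (fun n => (Nat.unpair n).2) ∘ joint Y₁ Y₂ = Y₂ := by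
  funext ω
  simp [joint]

/-- `(g ∘ Y, Y)` is a relabelling of `Y`. -/
theorem apply_comp_le_of_joint_mono {Ω : Type} (I : RV Ω → ℝ)
    (hmono : ∀ Y₁ Y₂ : RV Ω, I Y₁ ≤ I (joint Y₁ Y₂))
    (hrelabel : ∀ Y Y' : RV Ω,
      (∃ g : ℕ → ℕ, Y' = g ∘ Y) → (∃ g' : ℕ → ℕ, Y = g' ∘ Y') → I Y = I Y')
    (g : ℕ → ℕ) (Y : RV Ω) : I (g ∘ Y) ≤ I Y :=
  calc I (g ∘ Y) ≤ I (joint (g ∘ Y) Y) := hmono _ _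
    _ = I Y := hrelabel _ _ ⟨_, (unpair_snd_comp_joint _ _).symm⟩ ⟨_, joint_comp_self g Y⟩

theorem no_mechanistic_redundancy_of_GP_IID_TM_general
    {Ω : Type} [Fintype Ω] (p : Ω → ℝ)
    (Icap : List (RV Ω) → RV Ω → ℝ)
    -- Global Positivity
    (hGP : ∀ (l : List (RV Ω)) (Y : RV Ω), 0 ≤ Icap l Y)
    -- Independent Identity
    (hIID : ∀ X₁ X₂ : RV Ω, IndepRV p X₁ X₂ → Icap [X₁, X₂] (joint X₁ X₂) = 0)
    -- Target Monotonicity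
    (hTM : ∀ X₁ X₂ Y₁ Y₂ : RV Ω, Icap [X₁, X₂] Y₁ ≤ Icap [X₁, X₂] (joint Y₁ Y₂))
    -- Equivalence-class Invariance: Icap is invariant under relabelling
    -- (bijective recoding) of the target
    (hEI : ∀ (l : List (RV Ω)) (Y Y' : RV Ω),
      (∃ g : ℕ → ℕ, Y' = g ∘ Y) → (∃ g' : ℕ → ℕ, Y = g' ∘ Y') →
      Icap l Y = Icap l Y')
    (X₁ X₂ : RV Ω) (hind : IndepRV p X₁ X₂) (f : ℕ → ℕ → ℕ) :
    Icap [X₁, X₂] (fun ω => f (X₁ ω) (X₂ ω)) = 0 := by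
  have hdet : (fun ω => f (X₁ ω) (X₂ ω)) = (fun n => f n.unpair.1 n.unpair.2) ∘ joint X₁ X₂ := by
    funext ω
    simp [joint]
  rw [hdet]
  refine le_antisymm ?_ (hGP _ _)
  calc Icap [X₁, X₂] ((fun n => f n.unpair.1 n.unpair.2) ∘ joint X₁ X₂)
      ≤ Icap [X₁, X₂] (joint X₁ X₂) :=
        apply_comp_le_of_joint_mono (Icap [X₁, X₂]) (hTM X₁ X₂) (hEI [X₁, X₂]) _ _
    _ = 0 := hIID X₁ X₂ hind

/-- If a redundancy function satisfies Global Positivity, Independent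
Identity, and Target Monotonicity (together with Equivalence-class Invariance of the
target, which may be assumed), then it admits no mechanistic redundancy: for independent
sources and any deterministic function `f`, `Icap(X₁, X₂; f(X₁,X₂)) = 0`. -/
theorem no_mechanistic_redundancy_of_GP_IID_TM
    {Ω : Type} [Fintype Ω] (p : Ω → ℝ) (hp : IsPMF p)
    (Icap : List (RV Ω) → RV Ω → ℝ)
    -- Global Positivity
    (hGP : ∀ (l : List (RV Ω)) (Y : RV Ω), 0 ≤ Icap l Y)
    -- Independent Identity
    (hIID : ∀ X₁ X₂ : RV Ω, IndepRV p X₁ X₂ → Icap [X₁, X₂] (joint X₁ X₂) = 0)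
    -- Target Monotonicity
    (hTM : ∀ X₁ X₂ Y₁ Y₂ : RV Ω, Icap [X₁, X₂] Y₁ ≤ Icap [X₁, X₂] (joint Y₁ Y₂))
    -- Equivalence-class Invariance: Icap is invariant under relabelling
    -- (bijective recoding) of the target
    (hEI : ∀ (l : List (RV Ω)) (Y Y' : RV Ω),
      (∃ g : ℕ → ℕ, Y' = g ∘ Y) → (∃ g' : ℕ → ℕ, Y = g' ∘ Y') →
      Icap l Y = Icap l Y')
    (X₁ X₂ : RV Ω) (hind : IndepRV p X₁ X₂) (f : ℕ → ℕ → ℕ) :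
    Icap [X₁, X₂] (fun ω => f (X₁ ω) (X₂ ω)) = 0 :=
  no_mechanistic_redundancy_of_GP_IID_TM_general p Icap hGP hIID hTM hEI X₁ X₂ hind f
end

section
/- The maximum entropy joint distribution q(x_1, x_2, y) over finite alphabets, subject to matching both pairwise marginals q(x_1, y) = p(x_1, y) and q(x_2, y) = p(x_2, y) of a given full-support distribution p, is q(x_1, x_2, y) = p(x_1, y) p(x_2, y) / p(y), i.e., the distribution making X_1 and X_2 conditionally independent given Y. -/
/-- Shannon entropy of a distribution `q` on a finite type (natural logarithm). -/
noncomputable def entD {α : Type} [Fintype α] (q : α → ℝ) : ℝ :=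
  ∑ x, -(q x * Real.log (q x))

/-- Marginal distribution of the first two coordinates. -/
def mAB {A B C : Type} [Fintype C] (q : A × B × C → ℝ) : A × B → ℝ :=
  fun x => ∑ c, q (x.1, x.2, c)

/-- Marginal distribution of the first and third coordinates. -/
def mAC {A B C : Type} [Fintype B] (q : A × B × C → ℝ) : A × C → ℝ :=
  fun x => ∑ b, q (x.1, b, x.2)

/-- Marginal distribution of the second and third coordinates. -/
def mBC {A B C : Type} [Fintype A] (q : A × B × C → ℝ) : B × C → ℝ :=
  fun x => ∑ a, q (a, x.1, x.2)

/-- Marginal distribution of the first coordinate. -/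
def mA {A B C : Type} [Fintype B] [Fintype C] (q : A × B × C → ℝ) : A → ℝ :=
  fun a => ∑ b, ∑ c, q (a, b, c)

/-- Marginal distribution of the second coordinate. -/
def mB {A B C : Type} [Fintype A] [Fintype C] (q : A × B × C → ℝ) : B → ℝ :=
  fun b => ∑ a, ∑ c, q (a, b, c)

/-- Marginal distribution of the third coordinate (the target). -/
def mC {A B C : Type} [Fintype A] [Fintype B] (q : A × B × C → ℝ) : C → ℝ :=
  fun c => ∑ a, ∑ b, q (a, b, c)

/-- The distribution making `X₁` and `X₂` conditionally independent given `Y`,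
`q(x₁,x₂,y) = p(x₁,y) p(x₂,y) / p(y)`: the maximum entropy distribution subject to the
pairwise source-target marginal constraints. -/
noncomputable def Qstar {A B C : Type} [Fintype A] [Fintype B]
    (p : A × B × C → ℝ) : A × B × C → ℝ :=
  fun x => mAC p (x.1, x.2.2) * mBC p (x.2.1, x.2.2) / mC p x.2.2

/-- Mutual information between the two sources `I(X₁;X₂)` under `q`. -/
noncomputable def miAB {A B C : Type} [Fintype A] [Fintype B] [Fintype C]
    (q : A × B × C → ℝ) : ℝ :=
  entD (mA q) + entD (mB q) - entD (mAB q)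

/-- Mutual information `I(X₁;Y)` under `q`. -/
noncomputable def miAC {A B C : Type} [Fintype A] [Fintype B] [Fintype C]
    (q : A × B × C → ℝ) : ℝ :=
  entD (mA q) + entD (mC q) - entD (mAC q)

/-- Mutual information `I(X₂;Y)` under `q`. -/
noncomputable def miBC {A B C : Type} [Fintype A] [Fintype B] [Fintype C]
    (q : A × B × C → ℝ) : ℝ :=
  entD (mB q) + entD (mC q) - entD (mBC q)

/-- Conditional mutual information `I(X₁;X₂|Y)` under `q`. -/
noncomputable def cmiABgC {A B C : Type} [Fintype A] [Fintype B] [Fintype C]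
    (q : A × B × C → ℝ) : ℝ :=
  entD (mAC q) + entD (mBC q) - entD (mC q) - entD q

/-- Conditional mutual information `I(X₁;Y|X₂)` under `q`. -/
noncomputable def cmiACgB {A B C : Type} [Fintype A] [Fintype B] [Fintype C]
    (q : A × B × C → ℝ) : ℝ :=
  entD (mAB q) + entD (mBC q) - entD (mB q) - entD q

/-- Coinformation `I(X₁;X₂;Y) = I(X₁;X₂) − I(X₁;X₂|Y)` under `q`. -/
noncomputable def coI {A B C : Type} [Fintype A] [Fintype B] [Fintype C]
    (q : A × B × C → ℝ) : ℝ :=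
  miAB q - cmiABgC q

/-! The log-density of `Qstar p` is a function of `(x₁, y)` plus a function of `(x₂, y)`,
so its expectation is the same under every `q` with the prescribed pairwise marginals: the
cross entropy of any feasible `q` relative to `Qstar p` is `H(Qstar p)`. Gibbs' inequality
`H(q) ≤ -∑ q log r`, with equality only for `q = r`, then gives both the bound and
uniqueness. -/

open Real InformationTheory

lemma mul_klFun_div_eq {q r : ℝ} (hr : 0 < r) :
    r * klFun (q / r) = q * log q - q * log r + r - q := by
  rcases eq_or_ne q 0 with rfl | hq
  · simp [klFun_zero]
  · rw [klFun_apply, log_div hq hr.ne']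
    field_simp

section Gibbs

variable {α : Type} [Fintype α] {q r : α → ℝ}

lemma sum_mul_klFun_div_eq (hr : ∀ x, 0 < r x) (hsum : ∑ x, q x = ∑ x, r x) :
    ∑ x, r x * klFun (q x / r x) = -∑ x, q x * log (r x) - entD q := by
  simp only [mul_klFun_div_eq (hr _), Finset.sum_add_distrib, Finset.sum_sub_distrib, hsum,
    entD, Finset.sum_neg_distrib]
  ring

theorem entD_le_neg_sum_mul_log (hq : ∀ x, 0 ≤ q x) (hr : ∀ x, 0 < r x)
    (hsum : ∑ x, q x = ∑ x, r x) : entD q ≤ -∑ x, q x * log (r x) := by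
  have hkl : 0 ≤ ∑ x, r x * klFun (q x / r x) :=
    Finset.sum_nonneg fun x _ => mul_nonneg (hr x).le (klFun_nonneg (div_nonneg (hq x) (hr x).le))
  linarith [sum_mul_klFun_div_eq hr hsum]

theorem eq_of_entD_eq_neg_sum_mul_log (hq : ∀ x, 0 ≤ q x) (hr : ∀ x, 0 < r x)
    (hsum : ∑ x, q x = ∑ x, r x) (h : entD q = -∑ x, q x * log (r x)) : q = r := by
  have hzero : ∑ x, r x * klFun (q x / r x) = 0 := by
    rw [sum_mul_klFun_div_eq hr hsum, h, sub_self]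
  have hnonneg (x : α) : 0 ≤ r x * klFun (q x / r x) :=
    mul_nonneg (hr x).le (klFun_nonneg (div_nonneg (hq x) (hr x).le))
  funext x
  have hx := (Finset.sum_eq_zero_iff_of_nonneg fun x _ => hnonneg x).mp hzero x
    (Finset.mem_univ x)
  rw [mul_eq_zero, klFun_eq_zero_iff (div_nonneg (hq x) (hr x).le),
    div_eq_one_iff_eq (hr x).ne'] at hx
  exact hx.resolve_left (hr x).ne'

end Gibbs

section Marginals

variable {A B C : Type} {p : A × B × C → ℝ}

lemma mAC_pos [Fintype B] [Nonempty B] (hpos : ∀ x, 0 < p x) (y : A × C) : 0 < mAC p y :=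
  Finset.sum_pos (fun _ _ => hpos _) Finset.univ_nonempty

lemma mBC_pos [Fintype A] [Nonempty A] (hpos : ∀ x, 0 < p x) (y : B × C) : 0 < mBC p y :=
  Finset.sum_pos (fun _ _ => hpos _) Finset.univ_nonempty

variable [Fintype A] [Fintype B]

lemma mC_pos [Nonempty A] [Nonempty B] (hpos : ∀ x, 0 < p x) (c : C) : 0 < mC p c :=
  Finset.sum_pos (fun _ _ => Finset.sum_pos (fun _ _ => hpos _) Finset.univ_nonempty)
    Finset.univ_nonempty

lemma sum_mBC_eq_mC (q : A × B × C → ℝ) (c : C) : ∑ b, mBC q (b, c) = mC q c :=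
  Finset.sum_comm

variable [Fintype C]

lemma sum_mul_comp_mAC (q : A × B × C → ℝ) (f : A × C → ℝ) :
    ∑ x, q x * f (x.1, x.2.2) = ∑ y, mAC q y * f y := by
  simp only [mAC, Finset.sum_mul, Fintype.sum_prod_type]
  exact Finset.sum_congr rfl fun a _ => Finset.sum_comm

lemma sum_mul_comp_mBC (q : A × B × C → ℝ) (g : B × C → ℝ) :
    ∑ x, q x * g (x.2.1, x.2.2) = ∑ y, mBC q y * g y := by
  simp only [mBC, Finset.sum_mul, Fintype.sum_prod_type]
  rw [Finset.sum_comm]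
  exact Finset.sum_congr rfl fun b _ => Finset.sum_comm

lemma sum_eq_sum_mAC (q : A × B × C → ℝ) : ∑ x, q x = ∑ y, mAC q y := by
  simpa using sum_mul_comp_mAC q fun _ => (1 : ℝ)

lemma sum_mul_add_eq_of_mAC_eq_of_mBC_eq {q q' : A × B × C → ℝ} (f : A × C → ℝ)
    (g : B × C → ℝ) (hAC : mAC q = mAC q') (hBC : mBC q = mBC q') :
    ∑ x, q x * (f (x.1, x.2.2) + g (x.2.1, x.2.2)) =
      ∑ x, q' x * (f (x.1, x.2.2) + g (x.2.1, x.2.2)) := by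
  simp only [mul_add, Finset.sum_add_distrib, sum_mul_comp_mAC _ f, sum_mul_comp_mBC _ g, hAC,
    hBC]

end Marginals

section Qstar

variable {A B C : Type} [Fintype A] [Fintype B] {p : A × B × C → ℝ}

lemma Qstar_eq_mul_div (p : A × B × C → ℝ) (x : A × B × C) :
    Qstar p x = mAC p (x.1, x.2.2) * (mBC p (x.2.1, x.2.2) / mC p x.2.2) :=
  mul_div_assoc _ _ _

variable [Nonempty A] [Nonempty B]

lemma Qstar_pos (hpos : ∀ x, 0 < p x) (x : A × B × C) : 0 < Qstar p x :=
  div_pos (mul_pos (mAC_pos hpos _) (mBC_pos hpos _)) (mC_pos hpos _)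

lemma mAC_Qstar (hpos : ∀ x, 0 < p x) : mAC (Qstar p) = mAC p := by
  funext ⟨a, c⟩
  simp only [mAC, Qstar_eq_mul_div, ← Finset.mul_sum, ← Finset.sum_div, sum_mBC_eq_mC,
    div_self (mC_pos hpos c).ne', mul_one]

lemma mBC_Qstar (hpos : ∀ x, 0 < p x) : mBC (Qstar p) = mBC p := by
  funext ⟨b, c⟩
  simp only [mBC, Qstar, ← Finset.sum_mul, ← Finset.sum_div]
  change mC p c * _ / _ = _
  rw [mul_div_cancel_left₀ _ (mC_pos hpos c).ne']

lemma log_Qstar (hpos : ∀ x, 0 < p x) (x : A × B × C) :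
    log (Qstar p x) = log (mAC p (x.1, x.2.2)) + log (mBC p (x.2.1, x.2.2) / mC p x.2.2) := by
  rw [Qstar_eq_mul_div,
    log_mul (mAC_pos hpos _).ne' (div_pos (mBC_pos hpos _) (mC_pos hpos _)).ne']

variable [Fintype C]

lemma sum_Qstar (hpos : ∀ x, 0 < p x) (hsum : ∑ x, p x = 1) : ∑ x, Qstar p x = 1 := by
  rw [sum_eq_sum_mAC, mAC_Qstar hpos, ← sum_eq_sum_mAC, hsum]

lemma neg_sum_mul_log_Qstar (hpos : ∀ x, 0 < p x) {q : A × B × C → ℝ} (hAC : mAC q = mAC p)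
    (hBC : mBC q = mBC p) :
    -∑ x, q x * log (Qstar p x) = entD (Qstar p) := by
  simp only [entD, Finset.sum_neg_distrib, log_Qstar hpos]
  exact congrArg _ <| sum_mul_add_eq_of_mAC_eq_of_mBC_eq (fun y => log (mAC p y))
    (fun y => log (mBC p y / mC p y.2)) (hAC.trans (mAC_Qstar hpos).symm)
    (hBC.trans (mBC_Qstar hpos).symm)

end Qstar

/-- The maximum entropy joint distribution over finite alphabets,
subject to matching both pairwise source-target marginals of a given full-support
distribution `p`, is `q(x₁,x₂,y) = p(x₁,y) p(x₂,y) / p(y)`: it satisfies the constraints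
and uniquely maximizes the Shannon entropy among all distributions satisfying them. -/
theorem maxent_with_pairwise_constraints_is_conditional_independence
    {A B C : Type} [Fintype A] [Fintype B] [Fintype C]
    (p : A × B × C → ℝ) (hpos : ∀ x, 0 < p x) (hsum : ∑ x, p x = 1) :
    -- `Qstar p` satisfies the marginal constraints and is a probability distribution
    ((∀ x, 0 ≤ Qstar p x) ∧ (∑ x, Qstar p x = 1) ∧
      mAC (Qstar p) = mAC p ∧ mBC (Qstar p) = mBC p) ∧
    -- and it is the unique entropy maximizer among distributions with those marginals
    (∀ q : A × B × C → ℝ, (∀ x, 0 ≤ q x) → (∑ x, q x = 1) →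
      mAC q = mAC p → mBC q = mBC p →
      entD q ≤ entD (Qstar p) ∧ (entD q = entD (Qstar p) → q = Qstar p)) := by
  obtain ⟨⟨a, b, _⟩⟩ : Nonempty (A × B × C) :=
    Finset.univ_nonempty_iff.mp (Finset.nonempty_of_sum_ne_zero (hsum ▸ one_ne_zero))
  have : Nonempty A := ⟨a⟩
  have : Nonempty B := ⟨b⟩
  have hQsum := sum_Qstar hpos hsum
  refine ⟨⟨fun x => (Qstar_pos hpos x).le, hQsum, mAC_Qstar hpos, mBC_Qstar hpos⟩, ?_⟩
  intro q hq hq1 hAC hBC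
  have hsum_eq : ∑ x, q x = ∑ x, Qstar p x := hq1.trans hQsum.symm
  rw [← neg_sum_mul_log_Qstar hpos hAC hBC]
  exact ⟨entD_le_neg_sum_mul_log hq (Qstar_pos hpos) hsum_eq,
    eq_of_entD_eq_neg_sum_mul_log hq (Qstar_pos hpos) hsum_eq⟩
end

section
/- The Maximum Entropy Star redundancy satisfies Additivity: for two independent subsystems (X_1, X_2, Y) ⊥ (X_1', X_2', Y'), the maximum entropy distribution over the combined system with pairwise constraints factorizes, and consequently I_cap^MES((X_1,X_1'), (X_2,X_2'); (Y,Y')) = I_cap^MES(X_1, X_2; Y) + I_cap^MES(X_1', X_2'; Y'). -/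
/-- The product (independent combination) of two tri-variate systems, with combined
sources `S₁ = (X₁,X₁')`, `S₂ = (X₂,X₂')` and combined target `T = (Y,Y')`. -/
def prodSys {A B C A' B' C' : Type}
    (p : A × B × C → ℝ) (p' : A' × B' × C' → ℝ) :
    (A × A') × (B × B') × (C × C') → ℝ :=
  fun x => p (x.1.1, x.2.1.1, x.2.2.1) * p' (x.1.2, x.2.1.2, x.2.2.2)

/-! The pairwise marginals of a product system are products of the marginals of its factors,
so `Qstar` of a product is the product of the `Qstar`s by field arithmetic alone. Coinformation
is an alternating sum of seven entropies of marginals, and entropy is additive on products of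
normalized functions because `negMulLog (x * y) = y * negMulLog x + x * negMulLog y` holds for
all reals. `Qstar p` is normalized since it keeps the target marginal of `p`. -/

open Finset

section Entropy

variable {α β γ : Type} [Fintype α] [Fintype β] [Fintype γ]

lemma entD_eq_sum_negMulLog (q : α → ℝ) : entD q = ∑ x, Real.negMulLog (q x) := by
  simp only [entD, Real.negMulLog, neg_mul]

lemma entD_comp_equiv (e : γ ≃ α) (q : α → ℝ) : entD (q ∘ e) = entD q :=
  e.sum_comp fun x => -(q x * Real.log (q x))

lemma entD_mul (u : α → ℝ) (v : β → ℝ) :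
    entD (fun x : α × β => u x.1 * v x.2) = (∑ y, v y) * entD u + (∑ x, u x) * entD v := by
  simp only [entD_eq_sum_negMulLog, Real.negMulLog_mul, Fintype.sum_prod_type,
    sum_add_distrib, sum_mul, mul_sum]
  rw [sum_comm]
  congr 1
  rw [sum_comm]

lemma entD_eq_add_of_eq_mul (e : γ ≃ α × β) {f : γ → ℝ} {u : α → ℝ} {v : β → ℝ}
    (hf : ∀ x, f x = u (e x).1 * v (e x).2) (hu : ∑ x, u x = 1) (hv : ∑ y, v y = 1) :
    entD f = entD u + entD v := by
  rw [show f = (fun x : α × β => u x.1 * v x.2) ∘ e from funext hf, entD_comp_equiv,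
    entD_mul, hu, hv, one_mul, one_mul]

end Entropy

section Marginals

variable {A B C A' B' C' : Type}

lemma sum_mAB [Fintype A] [Fintype B] [Fintype C] (q : A × B × C → ℝ) :
    ∑ x, mAB q x = ∑ x, q x := by
  simp only [mAB, Fintype.sum_prod_type]

lemma sum_mAC [Fintype A] [Fintype B] [Fintype C] (q : A × B × C → ℝ) :
    ∑ x, mAC q x = ∑ x, q x := by
  simp only [mAC, Fintype.sum_prod_type]
  exact sum_congr rfl fun _ _ => sum_comm

lemma sum_mBC [Fintype A] [Fintype B] [Fintype C] (q : A × B × C → ℝ) :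
    ∑ x, mBC q x = ∑ x, q x := by
  simp only [mBC]
  rw [sum_comm, Fintype.sum_prod_type]

lemma sum_mA [Fintype A] [Fintype B] [Fintype C] (q : A × B × C → ℝ) :
    ∑ a, mA q a = ∑ x, q x := by
  simp only [mA, Fintype.sum_prod_type]

lemma sum_mB [Fintype A] [Fintype B] [Fintype C] (q : A × B × C → ℝ) :
    ∑ b, mB q b = ∑ x, q x := by
  simp only [mB, Fintype.sum_prod_type]
  rw [sum_comm]

lemma sum_mC [Fintype A] [Fintype B] [Fintype C] (q : A × B × C → ℝ) :
    ∑ c, mC q c = ∑ x, q x := by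
  rw [← sum_mAC, Fintype.sum_prod_type, sum_comm]
  rfl

lemma mAB_prodSys [Fintype C] [Fintype C'] (q : A × B × C → ℝ) (q' : A' × B' × C' → ℝ)
    (x : (A × A') × (B × B')) :
    mAB (prodSys q q') x = mAB q (x.1.1, x.2.1) * mAB q' (x.1.2, x.2.2) := by
  simp only [mAB, prodSys, Fintype.sum_prod_type, Fintype.sum_mul_sum]

lemma mAC_prodSys [Fintype B] [Fintype B'] (q : A × B × C → ℝ) (q' : A' × B' × C' → ℝ)
    (x : (A × A') × (C × C')) :
    mAC (prodSys q q') x = mAC q (x.1.1, x.2.1) * mAC q' (x.1.2, x.2.2) := by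
  simp only [mAC, prodSys, Fintype.sum_prod_type, Fintype.sum_mul_sum]

lemma mBC_prodSys [Fintype A] [Fintype A'] (q : A × B × C → ℝ) (q' : A' × B' × C' → ℝ)
    (x : (B × B') × (C × C')) :
    mBC (prodSys q q') x = mBC q (x.1.1, x.2.1) * mBC q' (x.1.2, x.2.2) := by
  simp only [mBC, prodSys, Fintype.sum_prod_type, Fintype.sum_mul_sum]

lemma mA_prodSys [Fintype B] [Fintype C] [Fintype B'] [Fintype C'] (q : A × B × C → ℝ)
    (q' : A' × B' × C' → ℝ) (a : A × A') : mA (prodSys q q') a = mA q a.1 * mA q' a.2 := by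
  change ∑ b, mAB (prodSys q q') (a, b) = _
  simp only [mAB_prodSys, Fintype.sum_prod_type]
  exact (Fintype.sum_mul_sum _ _).symm

lemma mB_prodSys [Fintype A] [Fintype C] [Fintype A'] [Fintype C'] (q : A × B × C → ℝ)
    (q' : A' × B' × C' → ℝ) (b : B × B') : mB (prodSys q q') b = mB q b.1 * mB q' b.2 := by
  change ∑ a, mAB (prodSys q q') (a, b) = _
  simp only [mAB_prodSys, Fintype.sum_prod_type]
  exact (Fintype.sum_mul_sum _ _).symm

lemma mC_prodSys [Fintype A] [Fintype B] [Fintype A'] [Fintype B'] (q : A × B × C → ℝ)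
    (q' : A' × B' × C' → ℝ) (c : C × C') : mC (prodSys q q') c = mC q c.1 * mC q' c.2 := by
  change ∑ a, mAC (prodSys q q') (a, c) = _
  simp only [mAC_prodSys, Fintype.sum_prod_type]
  exact (Fintype.sum_mul_sum _ _).symm

end Marginals

section Coinformation

variable {A B C A' B' C' : Type} [Fintype A] [Fintype B] [Fintype C]
  [Fintype A'] [Fintype B'] [Fintype C']

lemma coI_prodSys (q : A × B × C → ℝ) (q' : A' × B' × C' → ℝ)
    (hq : ∑ x, q x = 1) (hq' : ∑ x, q' x = 1) :
    coI (prodSys q q') = coI q + coI q' := by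
  have hA := entD_eq_add_of_eq_mul (Equiv.refl _) (mA_prodSys q q')
    (by rw [sum_mA, hq]) (by rw [sum_mA, hq'])
  have hB := entD_eq_add_of_eq_mul (Equiv.refl _) (mB_prodSys q q')
    (by rw [sum_mB, hq]) (by rw [sum_mB, hq'])
  have hC := entD_eq_add_of_eq_mul (Equiv.refl _) (mC_prodSys q q')
    (by rw [sum_mC, hq]) (by rw [sum_mC, hq'])
  have hAB := entD_eq_add_of_eq_mul (Equiv.prodProdProdComm _ _ _ _) (mAB_prodSys q q')
    (by rw [sum_mAB, hq]) (by rw [sum_mAB, hq'])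
  have hAC := entD_eq_add_of_eq_mul (Equiv.prodProdProdComm _ _ _ _) (mAC_prodSys q q')
    (by rw [sum_mAC, hq]) (by rw [sum_mAC, hq'])
  have hBC := entD_eq_add_of_eq_mul (Equiv.prodProdProdComm _ _ _ _) (mBC_prodSys q q')
    (by rw [sum_mBC, hq]) (by rw [sum_mBC, hq'])
  have hABC := entD_eq_add_of_eq_mul (f := prodSys q q')
    ((Equiv.prodCongr (Equiv.refl _) (Equiv.prodProdProdComm _ _ _ _)).trans
      (Equiv.prodProdProdComm _ _ _ _)) (fun _ => rfl) hq hq'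
  simp only [coI, miAB, cmiABgC, hA, hB, hC, hAB, hAC, hBC, hABC]
  ring

end Coinformation

section MaxEnt

variable {A B C : Type} [Fintype A] [Fintype B]

lemma mC_Qstar (p : A × B × C → ℝ) (c : C) : mC (Qstar p) c = mC p c := by
  have hA : ∑ a, mAC p (a, c) = mC p c := rfl
  have hB : ∑ b, mBC p (b, c) = mC p c := sum_comm
  calc mC (Qstar p) c = (∑ a, mAC p (a, c)) * (∑ b, mBC p (b, c)) / mC p c := by
        simp only [mC, Qstar, Fintype.sum_mul_sum, sum_div]
    _ = mC p c := by rw [hA, hB, mul_self_div_self]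

lemma sum_Qstar_s14 [Fintype C] (p : A × B × C → ℝ) : ∑ x, Qstar p x = ∑ x, p x := by
  simp only [← sum_mC, mC_Qstar]

lemma Qstar_prodSys {A' B' C' : Type} [Fintype A'] [Fintype B'] (p : A × B × C → ℝ)
    (p' : A' × B' × C' → ℝ) : Qstar (prodSys p p') = prodSys (Qstar p) (Qstar p') := by
  funext x
  simp only [Qstar, prodSys, mAC_prodSys, mBC_prodSys, mC_prodSys]
  rw [div_mul_div_comm, mul_mul_mul_comm]

end MaxEnt

theorem MES_additivity_general
    {A B C A' B' C' : Type} [Fintype A] [Fintype B] [Fintype C]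
    [Fintype A'] [Fintype B'] [Fintype C']
    (p : A × B × C → ℝ) (hsum : ∑ x, p x = 1)
    (p' : A' × B' × C' → ℝ) (hsum' : ∑ x, p' x = 1) :
    -- the maximum entropy distribution of the combined system factorizes
    (∀ x : (A × A') × (B × B') × (C × C'),
      Qstar (prodSys p p') x =
        Qstar p (x.1.1, x.2.1.1, x.2.2.1) * Qstar p' (x.1.2, x.2.1.2, x.2.2.2)) ∧
    -- and consequently the MES redundancy is additive
    coI (Qstar (prodSys p p')) = coI (Qstar p) + coI (Qstar p') := by
  refine ⟨fun x => congrFun (Qstar_prodSys p p') x, ?_⟩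
  rw [Qstar_prodSys]
  exact coI_prodSys _ _ (by rw [sum_Qstar_s14, hsum]) (by rw [sum_Qstar_s14, hsum'])

/-- The Maximum Entropy Star redundancy
`I_cap^MES(X₁,X₂;Y) = I_Q(X₁;X₂;Y)`, where `Q = Qstar p` is the maximum entropy
distribution matching the pairwise marginals, satisfies Additivity: for two independent
subsystems the maximum entropy distribution of the combined system factorizes, and
consequently the redundancy of the combined system is the sum of the redundancies. -/
theorem MES_additivity
    {A B C A' B' C' : Type} [Fintype A] [Fintype B] [Fintype C]
    [Fintype A'] [Fintype B'] [Fintype C']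
    (p : A × B × C → ℝ) (hpos : ∀ x, 0 < p x) (hsum : ∑ x, p x = 1)
    (p' : A' × B' × C' → ℝ) (hpos' : ∀ x, 0 < p' x) (hsum' : ∑ x, p' x = 1) :
    -- the maximum entropy distribution of the combined system factorizes
    (∀ x : (A × A') × (B × B') × (C × C'),
      Qstar (prodSys p p') x =
        Qstar p (x.1.1, x.2.1.1, x.2.2.1) * Qstar p' (x.1.2, x.2.1.2, x.2.2.2)) ∧
    -- and consequently the MES redundancy is additive
    coI (Qstar (prodSys p p')) = coI (Qstar p) + coI (Qstar p') :=
  MES_additivity_general p hsum p' hsum'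
end

section
/- For the Rescaled Redundancy, both PID atoms of the bivariate lattice are nonnegative: the unique information atoms I(X_i; Y) − I_RR(X_1,X_2;Y) ≥ 0 and the synergy atom I(X_1,X_2;Y) − I(X_1;Y) − I(X_2;Y) + I_RR(X_1,X_2;Y) ≥ 0. -/
/-- Coinformation `I(X₁;X₂;Y) = I(X₁;Y) + I(X₂;Y) − I(X₁,X₂;Y)`. -/
noncomputable def coi {Ω : Type} [Fintype Ω] (p : Ω → ℝ) (X₁ X₂ Y : RV Ω) : ℝ :=
  MI p X₁ Y + MI p X₂ Y - MI p (joint X₁ X₂) Y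

/-- `R_min = max(0, I(X₁;X₂;Y))`. -/
noncomputable def Rmin {Ω : Type} [Fintype Ω] (p : Ω → ℝ) (X₁ X₂ Y : RV Ω) : ℝ :=
  max 0 (coi p X₁ X₂ Y)

/-- `R_MMI = min(I(X₁;Y), I(X₂;Y))`. -/
noncomputable def RMMI {Ω : Type} [Fintype Ω] (p : Ω → ℝ) (X₁ X₂ Y : RV Ω) : ℝ :=
  min (MI p X₁ Y) (MI p X₂ Y)

/-- Normalised source dependency `I_s = I(X₁;X₂) / min(H(X₁),H(X₂))`. -/
noncomputable def Isrc {Ω : Type} [Fintype Ω] (p : Ω → ℝ) (X₁ X₂ : RV Ω) : ℝ :=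
  MI p X₁ X₂ / min (ent p X₁) (ent p X₂)

/-- The Rescaled Redundancy `I_RR = R_min + I_s (R_MMI − R_min)`. -/
noncomputable def IRR {Ω : Type} [Fintype Ω] (p : Ω → ℝ) (X₁ X₂ Y : RV Ω) : ℝ :=
  Rmin p X₁ X₂ Y + Isrc p X₁ X₂ * (RMMI p X₁ X₂ Y - Rmin p X₁ X₂ Y)

open Finset Real

lemma mul_div_le_of_nonneg {K : Type*} [Field K] [LinearOrder K] [IsStrictOrderedRing K]
    {a b : K} (ha : 0 ≤ a) (hb : 0 ≤ b) : a * (b / a) ≤ b := by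
  rcases ha.eq_or_lt with rfl | ha
  · simpa using hb
  · rw [mul_div_cancel₀ _ ha.ne']

section Entropy

variable {Ω α β γ : Type} [Fintype Ω] [DecidableEq α] [DecidableEq β] [DecidableEq γ]
  {p : Ω → ℝ}

lemma sum_image_prob_mul (p : Ω → ℝ) (X : Ω → α) (F : α → ℝ) :
    ∑ v ∈ image X univ, prob p X v * F v = ∑ ω, p ω * F (X ω) := by
  rw [← sum_fiberwise_of_maps_to (fun ω _ => mem_image_of_mem X (mem_univ ω))]
  refine sum_congr rfl fun v _ => ?_
  rw [prob, sum_mul]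
  exact sum_congr rfl fun ω hω => by rw [(mem_filter.mp hω).2]

lemma sum_image_prob (p : Ω → ℝ) (X : Ω → α) :
    ∑ v ∈ image X univ, prob p X v = ∑ ω, p ω := by
  simpa using sum_image_prob_mul p X (fun _ => 1)

lemma sum_image_prob_pair (p : Ω → ℝ) (X : Ω → α) (Y : Ω → β) (x : α) :
    ∑ y ∈ image Y univ, prob p (fun ω => (X ω, Y ω)) (x, y) = prob p X x := by
  rw [prob, ← sum_fiberwise_of_maps_to (fun ω _ => mem_image_of_mem Y (mem_univ ω)) p]
  refine sum_congr rfl fun y _ => ?_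
  rw [prob, filter_filter]
  simp only [Prod.mk.injEq]

lemma prob_nonneg (hp : ∀ ω, 0 ≤ p ω) (X : Ω → α) (v : α) : 0 ≤ prob p X v :=
  sum_nonneg fun ω _ => hp ω

lemma le_prob_apply (hp : ∀ ω, 0 ≤ p ω) (X : Ω → α) (ω : Ω) : p ω ≤ prob p X (X ω) :=
  single_le_sum (fun ω' _ => hp ω') (mem_filter.mpr ⟨mem_univ ω, rfl⟩)

lemma prob_apply_pos (hp : ∀ ω, 0 ≤ p ω) (X : Ω → α) {ω : Ω} (hω : 0 < p ω) :
    0 < prob p X (X ω) :=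
  hω.trans_le (le_prob_apply hp X ω)

lemma prob_apply_le_prob_apply (hp : ∀ ω, 0 ≤ p ω) {X : Ω → α} {W : Ω → β}
    (h : ∀ ω ω', W ω = W ω' → X ω = X ω') (ω : Ω) :
    prob p W (W ω) ≤ prob p X (X ω) :=
  sum_le_sum_of_subset_of_nonneg
    (fun ω' hω' => mem_filter.mpr ⟨mem_univ ω', h ω' ω (mem_filter.mp hω').2⟩)
    (fun ω' _ _ => hp ω')

lemma ent_eq_neg_sum (p : Ω → ℝ) (X : Ω → α) :
    ent p X = -∑ ω, p ω * log (prob p X (X ω)) := by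
  rw [ent, ← sum_image_prob_mul p X (fun v => log (prob p X v)), ← sum_neg_distrib]

lemma ent_le_ent_of_determines (hp : ∀ ω, 0 ≤ p ω) {X : Ω → α} {W : Ω → β}
    (h : ∀ ω ω', W ω = W ω' → X ω = X ω') : ent p X ≤ ent p W := by
  rw [ent_eq_neg_sum, ent_eq_neg_sum, neg_le_neg_iff]
  refine sum_le_sum fun ω _ => ?_
  rcases (hp ω).eq_or_lt with hω | hω
  · simp [← hω]
  · exact mul_le_mul_of_nonneg_left
      (log_le_log (prob_apply_pos hp W hω) (prob_apply_le_prob_apply hp h ω)) (hp ω)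

lemma ent_congr (hp : ∀ ω, 0 ≤ p ω) {X : Ω → α} {W : Ω → β}
    (h : ∀ ω ω', X ω = X ω' ↔ W ω = W ω') : ent p X = ent p W :=
  (ent_le_ent_of_determines hp fun ω ω' => (h ω ω').2).antisymm
    (ent_le_ent_of_determines hp fun ω ω' => (h ω ω').1)

lemma ent_const (hp : IsPMF p) : ent p (fun _ : Ω => ()) = 0 := by
  have hprob : prob p (fun _ : Ω => ()) () = 1 := by simpa [prob] using hp.2
  simp [ent_eq_neg_sum, hprob]

/-- Gibbs' inequality, with `f` and `g` unnormalised. -/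
lemma sum_mul_log_le_of_sum_mul_div_le {f g : Ω → ℝ} (hp : ∀ ω, 0 ≤ p ω)
    (hfg : ∀ ω, 0 < p ω → 0 < f ω ∧ 0 < g ω)
    (hsum : ∑ ω, p ω * (f ω / g ω) ≤ ∑ ω, p ω) :
    ∑ ω, p ω * log (f ω) ≤ ∑ ω, p ω * log (g ω) := by
  have hterm : ∀ ω, p ω * log (f ω) - p ω * log (g ω) ≤ p ω * (f ω / g ω) - p ω := by
    intro ω
    rcases (hp ω).eq_or_lt with hω | hω
    · simp [← hω]
    · obtain ⟨hf, hg⟩ := hfg ω hω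
      have hlog : log (f ω) - log (g ω) ≤ f ω / g ω - 1 := by
        rw [← log_div hf.ne' hg.ne']
        exact log_le_sub_one_of_pos (div_pos hf hg)
      nlinarith [mul_le_mul_of_nonneg_left hlog (hp ω)]
  have := sum_le_sum fun ω (_ : ω ∈ univ) => hterm ω
  rw [sum_sub_distrib, sum_sub_distrib] at this
  linarith

lemma sum_mul_log_mul {f g : Ω → ℝ} (hp : ∀ ω, 0 ≤ p ω)
    (hfg : ∀ ω, 0 < p ω → 0 < f ω ∧ 0 < g ω) :
    ∑ ω, p ω * log (f ω * g ω) = ∑ ω, p ω * log (f ω) + ∑ ω, p ω * log (g ω) := by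
  rw [← sum_add_distrib]
  refine sum_congr rfl fun ω _ => ?_
  rcases (hp ω).eq_or_lt with hω | hω
  · simp [← hω]
  · rw [log_mul (hfg ω hω).1.ne' (hfg ω hω).2.ne']; ring

/-- The conditionally independent coupling `P(z,x) P(z,y) / P(z)` has total mass at most
`∑ ω, p ω`, since it marginalises to `P(z)`. -/
lemma sum_mul_prob_pair_mul_div_le (hp : ∀ ω, 0 ≤ p ω) (X : Ω → α) (Y : Ω → β) (Z : Ω → γ) :
    ∑ ω, p ω * (prob p (fun ω => (Z ω, X ω)) (Z ω, X ω) * prob p (fun ω => (Z ω, Y ω)) (Z ω, Y ω)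
      / (prob p (fun ω => (Z ω, X ω, Y ω)) (Z ω, X ω, Y ω) * prob p Z (Z ω))) ≤ ∑ ω, p ω := by
  set V : Ω → γ × α × β := fun ω => (Z ω, X ω, Y ω)
  set A : Ω → γ × α := fun ω => (Z ω, X ω)
  set B : Ω → γ × β := fun ω => (Z ω, Y ω)
  set F : γ × α × β → ℝ := fun v => prob p A (v.1, v.2.1) * (prob p B (v.1, v.2.2) / prob p Z v.1)
  have hF : ∀ v, 0 ≤ F v := fun v =>
    mul_nonneg (prob_nonneg hp A _) (div_nonneg (prob_nonneg hp B _) (prob_nonneg hp Z _))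
  calc ∑ ω, p ω * (prob p A (A ω) * prob p B (B ω) / (prob p V (V ω) * prob p Z (Z ω)))
      = ∑ v ∈ image V univ, prob p V v * (F v / prob p V v) := by
        rw [sum_image_prob_mul p V (fun v => F v / prob p V v)]
        exact sum_congr rfl fun ω _ => by simp only [F, V, A, B]; ring
    _ ≤ ∑ v ∈ image V univ, F v :=
        sum_le_sum fun v _ => mul_div_le_of_nonneg (prob_nonneg hp V v) (hF v)
    _ ≤ ∑ v ∈ image Z univ ×ˢ (image X univ ×ˢ image Y univ), F v := by
        refine sum_le_sum_of_subset_of_nonneg ?_ fun v _ _ => hF v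
        simp only [subset_iff, mem_image, mem_univ, true_and, mem_product]
        rintro _ ⟨ω, rfl⟩
        exact ⟨⟨ω, rfl⟩, ⟨ω, rfl⟩, ⟨ω, rfl⟩⟩
    _ = ∑ z ∈ image Z univ, prob p Z z * (prob p Z z / prob p Z z) := by
        simp only [sum_product, F]
        refine sum_congr rfl fun z _ => ?_
        rw [← sum_mul_sum, ← sum_div, sum_image_prob_pair, sum_image_prob_pair]
    _ ≤ ∑ ω, p ω := by
        rw [← sum_image_prob p Z]
        exact sum_le_sum fun z _ => mul_div_le_of_nonneg (prob_nonneg hp Z z) (prob_nonneg hp Z z)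

/-- Submodularity of entropy, i.e. `I(X;Y|Z) ≥ 0`. -/
lemma ent_submodular (hp : ∀ ω, 0 ≤ p ω) (X : Ω → α) (Y : Ω → β) (Z : Ω → γ) :
    ent p (fun ω => (Z ω, X ω, Y ω)) + ent p Z
      ≤ ent p (fun ω => (Z ω, X ω)) + ent p (fun ω => (Z ω, Y ω)) := by
  have hratio := sum_mul_prob_pair_mul_div_le hp X Y Z
  set V : Ω → γ × α × β := fun ω => (Z ω, X ω, Y ω)
  set A : Ω → γ × α := fun ω => (Z ω, X ω)
  set B : Ω → γ × β := fun ω => (Z ω, Y ω)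
  have hAB : ∀ ω, 0 < p ω → 0 < prob p A (A ω) ∧ 0 < prob p B (B ω) :=
    fun _ hω => ⟨prob_apply_pos hp A hω, prob_apply_pos hp B hω⟩
  have hVZ : ∀ ω, 0 < p ω → 0 < prob p V (V ω) ∧ 0 < prob p Z (Z ω) :=
    fun _ hω => ⟨prob_apply_pos hp V hω, prob_apply_pos hp Z hω⟩
  have hgibbs := sum_mul_log_le_of_sum_mul_div_le hp
    (fun ω hω => ⟨mul_pos (hAB ω hω).1 (hAB ω hω).2, mul_pos (hVZ ω hω).1 (hVZ ω hω).2⟩) hratio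
  rw [sum_mul_log_mul hp hAB, sum_mul_log_mul hp hVZ] at hgibbs
  rw [ent_eq_neg_sum p V, ent_eq_neg_sum p Z, ent_eq_neg_sum p A, ent_eq_neg_sum p B]
  linarith

lemma MI_nonneg (hp : IsPMF p) (X : Ω → α) (Y : Ω → β) : 0 ≤ MI p X Y := by
  have h := ent_submodular hp.1 X Y (fun _ => ())
  rw [ent_const hp, ent_congr hp.1 (X := fun ω => ((), X ω, Y ω)) (W := fun ω => (X ω, Y ω))
      (by simp), ent_congr hp.1 (X := fun ω => ((), X ω)) (W := X) (by simp),
    ent_congr hp.1 (X := fun ω => ((), Y ω)) (W := Y) (by simp)] at h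
  rw [MI]
  linarith

/-- Data processing for a source `X` that is a function of `W`. -/
lemma MI_le_MI_of_determines (hp : ∀ ω, 0 ≤ p ω) {X : Ω → α} {W : Ω → γ}
    (h : ∀ ω ω', W ω = W ω' → X ω = X ω') (Y : Ω → β) : MI p X Y ≤ MI p W Y := by
  have hsub := ent_submodular hp W Y X
  rw [ent_congr hp (W := W) fun ω ω' => ⟨fun e => (Prod.mk.inj e).2,
      fun e => Prod.ext (h ω ω' e) e⟩,
    ent_congr hp (W := fun ω => (W ω, Y ω)) fun ω ω' => ⟨fun e => (Prod.mk.inj e).2,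
      fun e => Prod.ext (h ω ω' (Prod.mk.inj e).1) e⟩] at hsub
  rw [MI, MI]
  linarith

lemma MI_le_min_ent (hp : ∀ ω, 0 ≤ p ω) (X : Ω → α) (Y : Ω → β) :
    MI p X Y ≤ min (ent p X) (ent p Y) := by
  have hX := ent_le_ent_of_determines hp (X := X) (W := fun ω => (X ω, Y ω))
    fun _ _ e => (Prod.mk.inj e).1
  have hY := ent_le_ent_of_determines hp (X := Y) (W := fun ω => (X ω, Y ω))
    fun _ _ e => (Prod.mk.inj e).2
  rw [MI]
  exact le_min (by linarith) (by linarith)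

end Entropy

section RescaledRedundancy

variable {Ω : Type} [Fintype Ω] {p : Ω → ℝ}

lemma MI_le_MI_joint_left (hp : ∀ ω, 0 ≤ p ω) (X₁ X₂ Y : RV Ω) :
    MI p X₁ Y ≤ MI p (joint X₁ X₂) Y :=
  MI_le_MI_of_determines hp (fun _ _ e => (Nat.pair_eq_pair.1 e).1) Y

lemma MI_le_MI_joint_right (hp : ∀ ω, 0 ≤ p ω) (X₁ X₂ Y : RV Ω) :
    MI p X₂ Y ≤ MI p (joint X₁ X₂) Y :=
  MI_le_MI_of_determines hp (fun _ _ e => (Nat.pair_eq_pair.1 e).2) Y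

lemma Rmin_le_RMMI (hp : IsPMF p) (X₁ X₂ Y : RV Ω) : Rmin p X₁ X₂ Y ≤ RMMI p X₁ X₂ Y := by
  have h₁ := MI_le_MI_joint_left hp.1 X₁ X₂ Y
  have h₂ := MI_le_MI_joint_right hp.1 X₁ X₂ Y
  refine max_le (le_min (MI_nonneg hp X₁ Y) (MI_nonneg hp X₂ Y)) ?_
  rw [coi]
  exact le_min (by linarith) (by linarith)

lemma Isrc_nonneg (hp : IsPMF p) (X₁ X₂ : RV Ω) : 0 ≤ Isrc p X₁ X₂ :=
  div_nonneg (MI_nonneg hp X₁ X₂) ((MI_nonneg hp X₁ X₂).trans (MI_le_min_ent hp.1 X₁ X₂))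

lemma Isrc_le_one (hp : IsPMF p) (X₁ X₂ : RV Ω) : Isrc p X₁ X₂ ≤ 1 :=
  div_le_one_of_le₀ (MI_le_min_ent hp.1 X₁ X₂)
    ((MI_nonneg hp X₁ X₂).trans (MI_le_min_ent hp.1 X₁ X₂))

lemma Rmin_le_IRR (hp : IsPMF p) (X₁ X₂ Y : RV Ω) : Rmin p X₁ X₂ Y ≤ IRR p X₁ X₂ Y :=
  le_add_of_nonneg_right
    (mul_nonneg (Isrc_nonneg hp X₁ X₂) (sub_nonneg.2 (Rmin_le_RMMI hp X₁ X₂ Y)))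

lemma IRR_le_RMMI (hp : IsPMF p) (X₁ X₂ Y : RV Ω) : IRR p X₁ X₂ Y ≤ RMMI p X₁ X₂ Y := by
  have h := mul_le_of_le_one_left (sub_nonneg.2 (Rmin_le_RMMI hp X₁ X₂ Y)) (Isrc_le_one hp X₁ X₂)
  rw [IRR]
  linarith

end RescaledRedundancy

theorem rescaled_redundancy_local_positivity_general
    {Ω : Type} [Fintype Ω] (p : Ω → ℝ) (hp : IsPMF p)
    (X₁ X₂ Y : RV Ω) :
    0 ≤ MI p X₁ Y - IRR p X₁ X₂ Y ∧
    0 ≤ MI p X₂ Y - IRR p X₁ X₂ Y ∧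
    0 ≤ MI p (joint X₁ X₂) Y - MI p X₁ Y - MI p X₂ Y + IRR p X₁ X₂ Y := by
  have hupper := IRR_le_RMMI hp X₁ X₂ Y
  have hlower : coi p X₁ X₂ Y ≤ IRR p X₁ X₂ Y := (le_max_right _ _).trans (Rmin_le_IRR hp X₁ X₂ Y)
  refine ⟨sub_nonneg.2 (hupper.trans (min_le_left _ _)),
    sub_nonneg.2 (hupper.trans (min_le_right _ _)), ?_⟩
  rw [coi] at hlower
  linarith

/-- For the Rescaled Redundancy, all PID atoms of the bivariate lattice
are nonnegative: the unique information atoms `I(Xᵢ;Y) − I_RR ≥ 0` and the synergy atom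
`I(X₁,X₂;Y) − I(X₁;Y) − I(X₂;Y) + I_RR ≥ 0`. -/
theorem rescaled_redundancy_local_positivity
    {Ω : Type} [Fintype Ω] (p : Ω → ℝ) (hp : IsPMF p)
    (X₁ X₂ Y : RV Ω) (h₁ : 0 < ent p X₁) (h₂ : 0 < ent p X₂) :
    0 ≤ MI p X₁ Y - IRR p X₁ X₂ Y ∧
    0 ≤ MI p X₂ Y - IRR p X₁ X₂ Y ∧
    0 ≤ MI p (joint X₁ X₂) Y - MI p X₁ Y - MI p X₂ Y + IRR p X₁ X₂ Y :=
  rescaled_redundancy_local_positivity_general p hp X₁ X₂ Y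
end
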